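/- There exists a single sequence of estimators (Δ_n)_{n≥1}, where each Δ_n is a function from graphs on the vertex set {1,...,n} to the positive integers, such that for every dimension d ≥ 1, every probability density f on ℝ^d (with no further assumptions on f), and every sequence of radii (r_n) satisfying r_n → 0 and n·r_n^d → ∞, if G_n is the random geometric graph on {1,...,n} built from n i.i.d. points with density f and connection radius r_n, then P{Δ_n(G_n) = d} → 1 as n → ∞. -/

import Mathlib

open MeasureTheory Metric Filter

noncomputable section

abbrev Euc (d : ℕ) := EuclideanSpace ℝ (Fin d)

/-- The random geometric graph on `n` vertices determined by the points `x` and radius `r`: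
distinct `i, j` are adjacent iff `‖x i - x j‖ ≤ r`. -/
def geomGraph {n d : ℕ} (r : ℝ) (x : Fin n → Euc d) : SimpleGraph (Fin n) where
  Adj i j := i ≠ j ∧ dist (x i) (x j) ≤ r
  symm := ⟨fun i j h => ⟨h.1.symm, by rw [dist_comm]; exact h.2⟩⟩
  loopless := ⟨fun i h => h.1 rfl⟩

/-- The measure on ℝ^d with density `f` w.r.t. Lebesgue measure. -/
def densityMeasure {d : ℕ} (f : Euc d → ℝ) : Measure (Euc d) :=
  volume.withDensity fun x => ENNReal.ofReal (f x)

open scoped ENNReal NNReal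

def packingSet (d : ℕ) : Set ℕ :=
  {m | ∃ z : Fin m → Euc d, (∀ i, ‖z i‖ ≤ 1) ∧ ∀ i j, i ≠ j → 1 < ‖z i - z j‖}

lemma zero_mem_packingSet (d : ℕ) : 0 ∈ packingSet d :=
  ⟨fun i => 0, fun i => i.elim0, fun i => i.elim0⟩

lemma packingSet_bddAbove (d : ℕ) : BddAbove (packingSet d) := by
  obtain ⟨t, htf, htc⟩ := (totallyBounded_iff.1 (isCompact_closedBall (0:Euc d) 1).totallyBounded)
    (1/2) (by norm_num)
  haveI := htf.fintype
  refine ⟨Fintype.card t, fun m hm => ?_⟩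
  obtain ⟨z, hz1, hz2⟩ := hm
  have hmem : ∀ i, z i ∈ ⋃ y ∈ t, ball y (1/2) := fun i =>
    htc (by simpa [mem_closedBall, dist_zero_right] using hz1 i)
  choose y hyt hyb using fun i => by
    simpa only [Set.mem_iUnion, exists_prop] using hmem i
  have : Function.Injective (fun i : Fin m => (⟨y i, hyt i⟩ : t)) := by
    intro i j hij
    by_contra hne
    have h1 := hz2 i j hne
    have h2 : dist (z i) (z j) < 1 := by
      have ht := dist_triangle (z i) (y i) (z j)
      have hbi : dist (z i) (y i) < 1/2 := mem_ball.mp (hyb i)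
      have hbj : dist (y j) (z j) < 1/2 := by rw [dist_comm]; exact mem_ball.mp (hyb j)
      have hyij : y i = y j := congrArg Subtype.val hij
      rw [hyij] at ht hbi
      calc dist (z i) (z j) ≤ dist (z i) (y j) + dist (y j) (z j) := ht
        _ < 1 := by linarith
    rw [dist_eq_norm] at h2
    linarith
  simpa using Fintype.card_le_of_injective _ this

def packing (d : ℕ) : ℕ := sSup (packingSet d)

lemma packing_mem (d : ℕ) : packing d ∈ packingSet d :=
  Nat.sSup_mem ⟨0, zero_mem_packingSet d⟩ (packingSet_bddAbove d)

lemma le_packing {d m : ℕ} (h : m ∈ packingSet d) : m ≤ packing d :=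
  le_csSup (packingSet_bddAbove d) h

lemma packing_le {d k : ℕ} (h : ∀ m ∈ packingSet d, m ≤ k) : packing d ≤ k :=
  csSup_le ⟨0, zero_mem_packingSet d⟩ h

/-- scaling into packing config -/
lemma mem_packingSet_of_points {d m : ℕ} {r : ℝ} (hr : 0 < r) (p : Euc d)
    (y : Fin m → Euc d) (hy : ∀ i, dist (y i) p ≤ r)
    (hsep : ∀ i j, i ≠ j → r < dist (y i) (y j)) : m ∈ packingSet d := by
  refine ⟨fun i => r⁻¹ • (y i - p), fun i => ?_, fun i j hij => ?_⟩
  · rw [norm_smul, norm_inv, Real.norm_of_nonneg hr.le, ← dist_eq_norm]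
    rw [inv_mul_le_iff₀ hr]
    linarith [hy i]
  · have : (fun i => r⁻¹ • (y i - p)) i - (fun i => r⁻¹ • (y i - p)) j = r⁻¹ • (y i - y j) := by
      simp only []
      rw [← smul_sub]; congr 1; abel
    rw [this, norm_smul, norm_inv, Real.norm_of_nonneg hr.le, ← dist_eq_norm]
    rw [lt_inv_mul_iff₀ hr]
    linarith [hsep i j hij]


lemma packing_mem' (d : ℕ) : ∃ z : Fin (packing d) → Euc d,
    (∀ i, ‖z i‖ ≤ 1) ∧ ∀ i j, i ≠ j → 1 < ‖z i - z j‖ := packing_mem d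

lemma exists_slack_config {d m : ℕ}
    (hm : ∃ z : Fin m → Euc d, (∀ i, ‖z i‖ ≤ 1) ∧ ∀ i j, i ≠ j → 1 < ‖z i - z j‖) :
    ∃ δ : ℝ, 0 < δ ∧ δ ≤ 1/2 ∧ ∃ z : Fin m → Euc d,
      (∀ i, ‖z i‖ ≤ 1 - δ) ∧ ∀ i j, i ≠ j → 1 + δ ≤ ‖z i - z j‖ := by
  obtain ⟨z0, hz1, hz2⟩ := hm
  rcases le_or_gt m 1 with hm1 | hm1
  · refine ⟨1/2, by norm_num, le_refl _, fun _ => 0, fun i => by norm_num, fun i j hij => ?_⟩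
    exact absurd (Fin.ext (by omega : i.val = j.val)) hij
  · have hδ0ex : ∃ δ0 : ℝ, 0 < δ0 ∧ ∀ i j, i ≠ j → 1 + δ0 ≤ ‖z0 i - z0 j‖ := by
      have hne : (Finset.univ.offDiag : Finset (Fin m × Fin m)).Nonempty := by
        refine ⟨(⟨0, by omega⟩, ⟨1, by omega⟩), Finset.mem_offDiag.2
          ⟨Finset.mem_univ _, Finset.mem_univ _, ?_⟩⟩
        intro h
        exact absurd (congrArg Fin.val h) (by simp)
      obtain ⟨p, hp, hmin⟩ := Finset.exists_min_image
        (Finset.univ.offDiag : Finset (Fin m × Fin m)) (fun p => ‖z0 p.1 - z0 p.2‖) hne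
      rw [Finset.mem_offDiag] at hp
      refine ⟨‖z0 p.1 - z0 p.2‖ - 1, by linarith [hz2 p.1 p.2 hp.2.2], fun i j hij => ?_⟩
      have := hmin (i, j) (Finset.mem_offDiag.2 ⟨Finset.mem_univ _, Finset.mem_univ _, hij⟩)
      simp only at this
      linarith
    obtain ⟨δ0, hδ0pos, hδ0le⟩ := hδ0ex
    set δ : ℝ := δ0 / (2 * (1 + δ0)) with hδ
    have hδpos : 0 < δ := by positivity
    have hδ_eq : δ * (2 * (1 + δ0)) = δ0 := by
      rw [hδ]; field_simp
    have hδhalf : δ ≤ 1/2 := by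
      rw [hδ, div_le_div_iff₀ (by positivity) (by norm_num)]
      linarith
    refine ⟨δ, hδpos, hδhalf, fun i => (1 - δ) • z0 i, fun i => ?_, fun i j hij => ?_⟩
    · rw [norm_smul, Real.norm_of_nonneg (by linarith)]
      nlinarith [hz1 i, norm_nonneg (z0 i)]
    · have : (1 - δ) • z0 i - (1 - δ) • z0 j = (1 - δ) • (z0 i - z0 j) := by
        rw [smul_sub]
      rw [this, norm_smul, Real.norm_of_nonneg (by linarith)]
      nlinarith [hδ0le i j hij]

/-- hemisphere embedding -/
lemma succ_mem_packingSet {d m : ℕ}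
    (hm : ∃ z : Fin m → Euc d, (∀ i, ‖z i‖ ≤ 1) ∧ ∀ i j, i ≠ j → 1 < ‖z i - z j‖) :
    ∃ z : Fin (m+1) → Euc (d+1), (∀ i, ‖z i‖ ≤ 1) ∧ ∀ i j, i ≠ j → 1 < ‖z i - z j‖ := by
  obtain ⟨δ, hδpos, hδhalf, z, hz1, hz2⟩ := exists_slack_config hm
  set emb : Euc d → ℝ → Euc (d+1) := fun a t =>
    (WithLp.equiv 2 (∀ _ : Fin (d+1), ℝ)).symm (Fin.snoc (fun i => a i) t) with hemb
  have hnorm : ∀ (a : Euc d) (t : ℝ), ‖emb a t‖ ^ 2 = ‖a‖ ^ 2 + t ^ 2 := by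
    intro a t
    rw [EuclideanSpace.norm_eq, Real.sq_sqrt (by positivity), EuclideanSpace.norm_eq,
      Real.sq_sqrt (by positivity)]
    rw [Fin.sum_univ_castSucc]
    simp [hemb, WithLp.equiv_symm_apply, PiLp.toLp_apply, Fin.snoc_castSucc, Fin.snoc_last,
      Real.norm_eq_abs, sq_abs]
  have hsub : ∀ (a b : Euc d) (s t : ℝ), emb a s - emb b t = emb (a - b) (s - t) := by
    intro a b s t
    apply (WithLp.equiv 2 (∀ _ : Fin (d+1), ℝ)).injective
    funext i
    refine Fin.lastCases ?_ (fun i => ?_) i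
    · simp [hemb, WithLp.equiv_apply, WithLp.equiv_symm_apply, Fin.snoc_last]
    · simp [hemb, WithLp.equiv_apply, WithLp.equiv_symm_apply, Fin.snoc_castSucc]
  -- new configuration: z's at height -δ, pole at height 1
  refine ⟨Fin.snoc (fun i => emb (z i) (-δ)) (emb 0 1), fun i => ?_, fun i j hij => ?_⟩
  · refine Fin.lastCases ?_ (fun i => ?_) i
    · rw [Fin.snoc_last]
      have := hnorm (0 : Euc d) 1
      have h0 : ‖(0 : Euc d)‖ = 0 := norm_zero
      nlinarith [norm_nonneg (emb 0 1)]
    · rw [Fin.snoc_castSucc]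
      have := hnorm (z i) (-δ)
      have h1 := hz1 i
      nlinarith [norm_nonneg (emb (z i) (-δ)), norm_nonneg (z i)]
  · have key : ∀ (a b : Euc d) (s t : ℝ), 1 < (‖a - b‖)^2 + (s - t)^2 →
        1 < ‖emb a s - emb b t‖ := by
      intro a b s t h
      rw [hsub]
      have := hnorm (a - b) (s - t)
      nlinarith [norm_nonneg (emb (a-b) (s-t))]
    induction i using Fin.lastCases with
    | last =>
      induction j using Fin.lastCases with
      | last => exact absurd rfl hij
      | cast j' =>
        simp only [Fin.snoc_last, Fin.snoc_castSucc]
        apply key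
        nlinarith [norm_nonneg ((0 : Euc d) - z j'), sq_nonneg ‖(0 : Euc d) - z j'‖]
    | cast i' =>
      induction j using Fin.lastCases with
      | last =>
        simp only [Fin.snoc_last, Fin.snoc_castSucc]
        apply key
        nlinarith [norm_nonneg (z i' - (0 : Euc d)), sq_nonneg ‖z i' - (0 : Euc d)‖]
      | cast j' =>
        simp only [Fin.snoc_castSucc]
        apply key
        have hij' : i' ≠ j' := fun h => hij (by rw [h])
        nlinarith [hz2 i' j' hij', norm_nonneg (z i' - z j')]

lemma packing_lt_succ (d : ℕ) : packing d < packing (d+1) := by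
  have h : packing d + 1 ∈ packingSet (d+1) := succ_mem_packingSet (packing_mem' d)
  exact Nat.lt_of_succ_le (le_packing h)

lemma packing_strictMono : StrictMono packing :=
  strictMono_nat_of_lt_succ packing_lt_succ

def statSet (n : ℕ) (G : SimpleGraph (Fin n)) : Set ℕ :=
  {m | ∃ (v : Fin n) (g : Fin m → Fin n), Function.Injective g ∧ (∀ j, G.Adj v (g j)) ∧
    ∀ i j, i ≠ j → ¬ G.Adj (g i) (g j)}

lemma statSet_bddAbove (n : ℕ) (G : SimpleGraph (Fin n)) : BddAbove (statSet n G) :=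
  ⟨n, fun m hm => by
    obtain ⟨v, g, hg, -, -⟩ := hm
    simpa using Fintype.card_le_of_injective g hg⟩

def stat (n : ℕ) (G : SimpleGraph (Fin n)) : ℕ := sSup (statSet n G)

lemma le_stat {n m : ℕ} {G : SimpleGraph (Fin n)} (h : m ∈ statSet n G) : m ≤ stat n G :=
  le_csSup (statSet_bddAbove n G) h

lemma statSet_subset_packingSet {n d : ℕ} {r : ℝ} (hr : 0 < r) (x : Fin n → Euc d) {m : ℕ}
    (hm : m ∈ statSet n (geomGraph r x)) : m ∈ packingSet d := by
  obtain ⟨v, g, hinj, hadj, hnadj⟩ := hm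
  refine mem_packingSet_of_points hr (x v) (fun i => x (g i)) (fun i => ?_) (fun i j hij => ?_)
  · rw [dist_comm]; exact (hadj i).2
  · by_contra hle
    push_neg at hle
    exact hnadj i j hij ⟨fun h => hij (hinj h), hle⟩

lemma stat_le_packing {n d : ℕ} {r : ℝ} (hr : 0 < r) (x : Fin n → Euc d) :
    stat n (geomGraph r x) ≤ packing d :=
  csSup_le' fun _ hm => le_packing (statSet_subset_packingSet hr x hm)

def deltaFn (n : ℕ) (G : SimpleGraph (Fin n)) : ℕ :=
  max 1 (sInf {e | 1 ≤ e ∧ stat n G ≤ packing e})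

lemma one_le_deltaFn (n : ℕ) (G : SimpleGraph (Fin n)) : 1 ≤ deltaFn n G := le_max_left _ _

lemma deltaFn_eq {n d : ℕ} {G : SimpleGraph (Fin n)} (hd : 1 ≤ d)
    (h : stat n G = packing d) : deltaFn n G = d := by
  have hmem : d ∈ {e | 1 ≤ e ∧ stat n G ≤ packing e} := ⟨hd, h.le⟩
  have hinf : sInf {e | 1 ≤ e ∧ stat n G ≤ packing e} = d := by
    refine le_antisymm (Nat.sInf_le hmem) (le_csInf ⟨d, hmem⟩ fun e he => ?_)
    by_contra hlt
    push_neg at hlt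
    have := packing_strictMono hlt
    rw [← h] at this
    exact absurd he.2 (not_le.2 this)
  rw [deltaFn, hinf]
  omega


lemma one_le_abs_natCast_sub {a b : ℕ} (h : a ≠ b) : (1:ℝ) ≤ |(a:ℝ) - (b:ℝ)| := by
  rcases h.lt_or_gt with h | h
  · rw [abs_sub_comm, abs_of_nonneg (sub_nonneg.2 (by exact_mod_cast h.le))]
    have : (a:ℝ) + 1 ≤ b := by exact_mod_cast h
    linarith
  · rw [abs_of_nonneg (sub_nonneg.2 (by exact_mod_cast h.le))]
    have : (b:ℝ) + 1 ≤ a := by exact_mod_cast h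
    linarith

/-- The key geometric configuration: a max packing config with slack, plus a center point
separated from all config points. -/
lemma exists_config (d : ℕ) (hd : 1 ≤ d) :
    ∃ (ε : ℝ) (w : Euc d) (z : Fin (packing d) → Euc d),
      0 < ε ∧ ε ≤ 1 ∧ ‖w‖ ≤ 1 ∧ (∀ j, ‖z j‖ ≤ 1) ∧
      (∀ i j, i ≠ j → 1 + 3*ε ≤ ‖z i - z j‖) ∧
      (∀ j, 3*ε ≤ ‖w - z j‖) ∧ (∀ j, ‖w - z j‖ ≤ 1 - 3*ε) := by
  obtain ⟨δ, hδpos, hδhalf, z, hz1, hz2⟩ := exists_slack_config (packing_mem' d)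
  set u : Euc d := EuclideanSpace.single (⟨0, hd⟩ : Fin d) (1:ℝ) with hu
  have hun : ‖u‖ = 1 := by rw [hu, EuclideanSpace.norm_single]; norm_num
  set M : ℝ := (packing d : ℝ) with hM
  have hM0 : 0 ≤ M := by rw [hM]; positivity
  set step : ℝ := δ / (2 * (M + 1)) with hstep
  have hsteppos : 0 < step := by rw [hstep]; positivity
  set γ : ℝ := δ / (4 * (M + 1)) with hγ
  have hγpos : 0 < γ := by rw [hγ]; positivity
  have h2γ : 2 * γ = step := by rw [hγ, hstep]; field_simp; ring
  -- find a good candidate by pigeonhole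
  have hgood : ∃ k : Fin (packing d + 1), ∀ j, γ ≤ ‖((k:ℝ) * step) • u - z j‖ := by
    by_contra hbad
    push_neg at hbad
    choose jf hjf using hbad
    obtain ⟨k, k', hkk', hjeq⟩ := Fintype.exists_ne_map_eq_of_card_lt jf (by simp)
    have hdd : ‖((k:ℝ) * step) • u - ((k':ℝ) * step) • u‖ < 2 * γ := by
      calc ‖((k:ℝ) * step) • u - ((k':ℝ) * step) • u‖
          ≤ ‖((k:ℝ) * step) • u - z (jf k)‖ + ‖z (jf k) - ((k':ℝ) * step) • u‖ :=
            norm_sub_le_norm_sub_add_norm_sub _ _ _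
        _ < γ + γ := by
            refine add_lt_add (hjf k) ?_
            rw [norm_sub_rev, hjeq]
            exact hjf k'
        _ = 2 * γ := by ring
    have heq : ((k:ℝ) * step) • u - ((k':ℝ) * step) • u = (((k:ℝ) - (k':ℝ)) * step) • u := by
      rw [← sub_smul]; ring_nf
    rw [heq, norm_smul, hun, mul_one, Real.norm_eq_abs, abs_mul,
      abs_of_nonneg hsteppos.le, h2γ] at hdd
    have h1 : (1:ℝ) ≤ |(k:ℝ) - (k':ℝ)| :=
      one_le_abs_natCast_sub (fun h => hkk' (Fin.ext h))
    nlinarith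
  obtain ⟨k, hk⟩ := hgood
  set w : Euc d := ((k:ℝ) * step) • u with hw
  have hwn : ‖w‖ ≤ δ / 2 := by
    rw [hw, norm_smul, hun, mul_one, Real.norm_eq_abs, abs_mul,
      abs_of_nonneg hsteppos.le, Nat.abs_cast]
    have hkm : ((k:ℕ):ℝ) ≤ M + 1 := by
      rw [hM]; push_cast
      have h1 : (k:ℕ) ≤ packing d + 1 := Nat.le_succ_of_le (Nat.lt_succ_iff.mp k.isLt)
      exact_mod_cast h1
    calc ((k:ℕ):ℝ) * step = δ * (((k:ℕ):ℝ) / (2 * (M + 1))) := by rw [hstep]; ring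
      _ ≤ δ * ((M + 1) / (2 * (M + 1))) := by gcongr
      _ = δ / 2 := by field_simp
  have hγδ : γ ≤ δ := by
    rw [hγ, div_le_iff₀ (by positivity)]
    nlinarith
  refine ⟨min (γ/3) (δ/6), w, z, by positivity, ?_, by linarith,
    fun j => by linarith [hz1 j], ?_, ?_, ?_⟩
  · calc min (γ/3) (δ/6) ≤ δ/6 := min_le_right _ _
      _ ≤ 1 := by linarith
  · intro i j hij
    have hm : min (γ/3) (δ/6) ≤ δ/6 := min_le_right _ _
    linarith [hz2 i j hij]
  · intro j
    have hm : min (γ/3) (δ/6) ≤ γ/3 := min_le_left _ _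
    linarith [hk j]
  · intro j
    have hm : min (γ/3) (δ/6) ≤ δ/6 := min_le_right _ _
    calc ‖w - z j‖ ≤ ‖w‖ + ‖z j‖ := norm_sub_le _ _
      _ ≤ δ/2 + (1 - δ) := by linarith [hz1 j]
      _ ≤ 1 - 3 * min (γ/3) (δ/6) := by linarith

/-- On the event that each of the balls contains a sample point, the estimator equals d. -/
lemma deltaFn_eq_on_event {n d : ℕ} (hd : 1 ≤ d) {r ε : ℝ} (hr : 0 < r) (hε : 0 < ε)
    (w : Euc d) (z : Fin (packing d) → Euc d) (x0 : Euc d)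
    (h1 : ∀ i j, i ≠ j → 1 + 3*ε ≤ ‖z i - z j‖)
    (h2 : ∀ j, 3*ε ≤ ‖w - z j‖) (h3 : ∀ j, ‖w - z j‖ ≤ 1 - 3*ε)
    (x : Fin n → Euc d)
    (h0 : ∃ i, x i ∈ closedBall (x0 + r • w) (ε*r))
    (hz : ∀ j, ∃ i, x i ∈ closedBall (x0 + r • z j) (ε*r)) :
    deltaFn n (geomGraph r x) = d := by
  obtain ⟨v, hv⟩ := h0
  choose g hg using hz
  have hcdist : ∀ a b : Euc d, dist (x0 + r • a) (x0 + r • b) = r * ‖a - b‖ := by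
    intro a b
    rw [dist_eq_norm, add_sub_add_left_eq_sub, ← smul_sub, norm_smul,
      Real.norm_of_nonneg hr.le]
  have hub : ∀ (a b : Euc d) (p q : Euc d), p ∈ closedBall (x0 + r • a) (ε*r) →
      q ∈ closedBall (x0 + r • b) (ε*r) → dist p q ≤ r * ‖a - b‖ + 2*(ε*r) := by
    intro a b p q hp hq
    rw [mem_closedBall] at hp hq
    calc dist p q ≤ dist p (x0 + r • a) + dist (x0 + r • a) (x0 + r • b) + dist (x0 + r • b) q :=
          dist_triangle4 _ _ _ _
      _ ≤ ε*r + r * ‖a - b‖ + ε*r := by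
          have hq' : dist (x0 + r • b) q ≤ ε*r := by rw [dist_comm]; exact hq
          rw [hcdist]
          exact add_le_add (add_le_add hp le_rfl) hq' 
      _ = r * ‖a - b‖ + 2*(ε*r) := by ring
  have hlb : ∀ (a b : Euc d) (p q : Euc d), p ∈ closedBall (x0 + r • a) (ε*r) →
      q ∈ closedBall (x0 + r • b) (ε*r) → r * ‖a - b‖ - 2*(ε*r) ≤ dist p q := by
    intro a b p q hp hq
    rw [mem_closedBall] at hp hq
    have h4 : dist (x0 + r • a) (x0 + r • b) ≤ dist (x0 + r • a) p + dist p q + dist q (x0 + r • b) :=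
      dist_triangle4 _ _ _ _
    rw [hcdist] at h4
    have hp' : dist (x0 + r • a) p ≤ ε*r := by rw [dist_comm]; exact hp
    linarith [hp', hq]
  have hmem : packing d ∈ statSet n (geomGraph r x) := by
    refine ⟨v, g, ?_, ?_, ?_⟩
    · intro i j hgij
      by_contra hij
      have := hlb (z i) (z j) (x (g i)) (x (g j)) (hg i) (hg j)
      rw [hgij, dist_self] at this
      have := h1 i j hij
      nlinarith
    · intro j
      constructor
      · intro hvg
        have := hlb w (z j) (x v) (x (g j)) hv (hg j)
        rw [hvg, dist_self] at this
        have := h2 j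
        nlinarith
      · have := hub w (z j) (x v) (x (g j)) hv (hg j)
        have := h3 j
        nlinarith
    · intro i j hij hadj
      have := hlb (z i) (z j) (x (g i)) (x (g j)) (hg i) (hg j)
      have h5 := h1 i j hij
      have := hadj.2
      nlinarith
  have hstat : stat n (geomGraph r x) = packing d :=
    le_antisymm (stat_le_packing hr x) (le_stat hmem)
  exact deltaFn_eq hd hstat

lemma exists_density_point (d : ℕ) (f : Euc d → ℝ) (hfm : Measurable f)
    (hf1 : ∫⁻ x, ENNReal.ofReal (f x) = 1) {ε : ℝ} (hε : 0 < ε) (hε1 : ε ≤ 1) :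
    ∃ (x0 : Euc d) (C : ℝ), 0 < C ∧ ∃ r0 : ℝ, 0 < r0 ∧ ∀ r : ℝ, 0 < r → r ≤ r0 →
      ∀ y : Euc d, ‖y‖ ≤ 1 →
        ENNReal.ofReal (C * r^d) ≤ densityMeasure f (closedBall (x0 + r • y) (ε*r)) := by
  -- Step 1: find a set A of positive measure on which f is bounded below
  have hpos : volume {x : Euc d | 0 < f x} ≠ 0 := by
    intro h0
    have hz : ∫⁻ x, ENNReal.ofReal (f x) = 0 := by
      rw [lintegral_eq_zero_iff hfm.ennreal_ofReal]
      refine (MeasureTheory.ae_iff).2 (measure_mono_null ?_ h0)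
      intro x hx
      simp only [Set.mem_setOf_eq, Pi.zero_apply, ENNReal.ofReal_eq_zero] at hx ⊢
      exact lt_of_not_ge hx
    rw [hf1] at hz
    exact one_ne_zero hz
  obtain ⟨k, hk⟩ : ∃ k : ℕ, volume ({x : Euc d | ((k:ℝ)+1)⁻¹ ≤ f x} ∩ ball (0:Euc d) ((k:ℝ)+1)) ≠ 0 := by
    by_contra hall
    push_neg at hall
    apply hpos
    refine measure_mono_null (fun x hx => ?_) (measure_iUnion_null hall)
    simp only [Set.mem_setOf_eq] at hx
    obtain ⟨k1, hk1⟩ := exists_nat_gt (f x)⁻¹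
    obtain ⟨k2, hk2⟩ := exists_nat_gt ‖x‖
    refine Set.mem_iUnion.2 ⟨k1 + k2, ⟨?_, ?_⟩⟩
    · simp only [Set.mem_setOf_eq]
      apply inv_le_of_inv_le₀ hx
      push_cast
      linarith [Nat.cast_nonneg (α := ℝ) k2]
    · rw [mem_ball, dist_zero_right]
      push_cast
      linarith [Nat.cast_nonneg (α := ℝ) k1]
  set c : ℝ := ((k:ℝ)+1)⁻¹ with hc
  have hcpos : 0 < c := by positivity
  set A : Set (Euc d) := {x : Euc d | c ≤ f x} ∩ ball (0:Euc d) ((k:ℝ)+1) with hA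
  have hAmeas : MeasurableSet A := ((measurableSet_le measurable_const hfm)).inter measurableSet_ball
  -- Step 2: Lebesgue density point
  have hbesi := Besicovitch.ae_tendsto_measure_inter_div (volume : Measure (Euc d)) A
  haveI : NeBot (ae (volume.restrict A)) := by
    refine ae_neBot.2 fun h => ?_
    have : (volume.restrict A) Set.univ = volume A := by
      rw [Measure.restrict_apply_univ]
    rw [h] at this
    simp only [Measure.coe_zero, Pi.zero_apply] at this
    exact hk this.symm
  obtain ⟨x0, hx0⟩ := hbesi.exists
  -- Step 3: quantitative density at small scales
  set τ : ℝ := ε^d / 2^(d+1) with hτ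
  have hτpos : 0 < τ := by positivity
  have hτ1 : τ ≤ 1 := by
    rw [hτ, div_le_one (by positivity)]
    have h1 : ε^d ≤ 1 := pow_le_one₀ hε.le hε1
    have h2 : (1:ℝ) ≤ 2^(d+1) := one_le_pow₀ (by norm_num)
    linarith
  have hlt : (1 : ℝ≥0∞) - ENNReal.ofReal τ < 1 :=
    ENNReal.sub_lt_self ENNReal.one_ne_top one_ne_zero
      (by simp only [ne_eq, ENNReal.ofReal_eq_zero, not_le]; exact hτpos)
  have hev : ∀ᶠ ρ in nhdsWithin (0:ℝ) (Set.Ioi 0),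
      1 - ENNReal.ofReal τ < volume (A ∩ closedBall x0 ρ) / volume (closedBall x0 ρ) :=
    hx0.eventually (eventually_gt_nhds hlt)
  obtain ⟨r1, hr1mem, hr1⟩ := (mem_nhdsGT_iff_exists_Ioc_subset).1 hev
  have hr1pos : 0 < r1 := hr1mem
  set κ : ℝ≥0∞ := volume (closedBall (0:Euc d) 1) with hκ
  have hκ0 : κ ≠ 0 := (measure_closedBall_pos volume _ one_pos).ne'
  have hκtop : κ ≠ ⊤ := measure_closedBall_lt_top.ne
  have hκt : 0 < κ.toReal := ENNReal.toReal_pos hκ0 hκtop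
  refine ⟨x0, c * (ε^d/2) * κ.toReal, mul_pos (mul_pos hcpos (by positivity)) hκt,
    r1/2, by positivity, fun r hr hrle y hy => ?_⟩
  set B : Set (Euc d) := closedBall (x0 + r • y) (ε*r) with hB
  set D : Set (Euc d) := closedBall x0 (2*r) with hD
  have hBD : B ⊆ D := by
    apply closedBall_subset_closedBall'
    have : dist (x0 + r • y) x0 ≤ r := by
      rw [dist_eq_norm, add_sub_cancel_left, norm_smul, Real.norm_of_nonneg hr.le]
      nlinarith [norm_nonneg y]
    nlinarith
  have hratio : 1 - ENNReal.ofReal τ < volume (A ∩ D) / volume D :=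
    hr1 ⟨by positivity, by linarith⟩
  have hvolD : volume D = ENNReal.ofReal ((2*r)^d) * κ := by
    rw [hD, Measure.addHaar_closedBall' volume x0 (by positivity), finrank_euclideanSpace_fin]
  have hvolB : volume B = ENNReal.ofReal ((ε*r)^d) * κ := by
    rw [hB, Measure.addHaar_closedBall' volume _ (by positivity), finrank_euclideanSpace_fin]
  have hDne : volume D ≠ 0 := (measure_closedBall_pos volume _ (by positivity)).ne'
  have hDtop : volume D ≠ ⊤ := measure_closedBall_lt_top.ne
  have hAD : (1 - ENNReal.ofReal τ) * volume D ≤ volume (A ∩ D) := by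
    rw [← ENNReal.le_div_iff_mul_le (Or.inl hDne) (Or.inl hDtop)]
    exact hratio.le
  have hsplitD : volume (D ∩ A) + volume (D \ A) = volume D := measure_inter_add_diff D hAmeas
  have hDdiff : volume (D \ A) ≤ ENNReal.ofReal τ * volume D := by
    have h1 : volume (D \ A) + (1 - ENNReal.ofReal τ) * volume D ≤
        ENNReal.ofReal τ * volume D + (1 - ENNReal.ofReal τ) * volume D := by
      calc volume (D \ A) + (1 - ENNReal.ofReal τ) * volume D
          ≤ volume (D \ A) + volume (D ∩ A) := by
            gcongr
            rw [Set.inter_comm]; exact hAD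
        _ = volume D := by rw [add_comm]; exact hsplitD
        _ = 1 * volume D := (one_mul _).symm
        _ = (ENNReal.ofReal τ + (1 - ENNReal.ofReal τ)) * volume D := by
            rw [add_tsub_cancel_of_le (by simpa using ENNReal.ofReal_le_one.2 hτ1)]
        _ = ENNReal.ofReal τ * volume D + (1 - ENNReal.ofReal τ) * volume D := by
            rw [add_mul]
    have hfin : (1 - ENNReal.ofReal τ) * volume D ≠ ⊤ :=
      ne_top_of_le_ne_top hDtop (le_trans (mul_le_mul_left tsub_le_self _) (one_mul _).le)
    exact (WithTop.add_le_add_iff_right hfin).1 h1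
  have hsplitB : volume (B ∩ A) + volume (B \ A) = volume B := measure_inter_add_diff B hAmeas
  have hBA : volume B - ENNReal.ofReal τ * volume D ≤ volume (B ∩ A) := by
    rw [tsub_le_iff_right]
    calc volume B = volume (B ∩ A) + volume (B \ A) := hsplitB.symm
      _ ≤ volume (B ∩ A) + volume (D \ A) :=
          add_le_add_right (measure_mono (Set.diff_subset_diff_left hBD)) _
      _ ≤ volume (B ∩ A) + ENNReal.ofReal τ * volume D := add_le_add_right hDdiff _
  -- numeric lower bound for the volume of B ∩ A
  have hnum : ENNReal.ofReal (ε^d/2 * r^d) * κ ≤ volume (B ∩ A) := by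
    have hexp : τ * (2*r)^d = ε^d/2 * r^d := by
      rw [hτ, mul_pow]
      field_simp
      ring
    have hreal : ε^d/2 * r^d ≤ (ε*r)^d - τ * (2*r)^d := by
      rw [hexp, mul_pow]
      nlinarith [pow_nonneg hε.le d, pow_nonneg hr.le d]
    have hofr : ENNReal.ofReal (ε^d/2 * r^d)
        ≤ ENNReal.ofReal ((ε*r)^d) - ENNReal.ofReal (τ * (2*r)^d) := by
      rw [← ENNReal.ofReal_sub _ (by positivity)]
      exact ENNReal.ofReal_le_ofReal hreal
    calc ENNReal.ofReal (ε^d/2 * r^d) * κ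
        ≤ (ENNReal.ofReal ((ε*r)^d) - ENNReal.ofReal (τ * (2*r)^d)) * κ :=
          mul_le_mul_left hofr κ
      _ = ENNReal.ofReal ((ε*r)^d) * κ - ENNReal.ofReal (τ * (2*r)^d) * κ := by
          rw [ENNReal.sub_mul (fun _ _ => hκtop)]
      _ = volume B - ENNReal.ofReal τ * volume D := by
          rw [hvolB, hvolD, ← mul_assoc, ← ENNReal.ofReal_mul hτpos.le]
      _ ≤ volume (B ∩ A) := hBA
  -- lower bound the density measure
  have hlow : ENNReal.ofReal c * volume (B ∩ A) ≤ densityMeasure f B := by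
    rw [densityMeasure, withDensity_apply _ measurableSet_closedBall]
    calc ENNReal.ofReal c * volume (B ∩ A) = ∫⁻ _ in B ∩ A, ENNReal.ofReal c ∂volume := by
          rw [setLIntegral_const]
      _ ≤ ∫⁻ x in B ∩ A, ENNReal.ofReal (f x) ∂volume := by
          refine setLIntegral_mono hfm.ennreal_ofReal fun x hx => ?_
          exact ENNReal.ofReal_le_ofReal hx.2.1
      _ ≤ ∫⁻ x in B, ENNReal.ofReal (f x) ∂volume :=
          lintegral_mono_set Set.inter_subset_left
  refine le_trans ?_ (le_trans (mul_le_mul_right hnum _) hlow)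
  rw [← ENNReal.ofReal_toReal hκtop, ← ENNReal.ofReal_mul (by positivity),
    ← ENNReal.ofReal_mul hcpos.le]
  apply ENNReal.ofReal_le_ofReal
  rw [ENNReal.toReal_ofReal] <;> nlinarith [ENNReal.toReal_nonneg (a := κ), pow_nonneg hr.le d, pow_nonneg hε.le d]

/-- There is a single sequence of graph functionals `Δ n : SimpleGraph (Fin n) → ℕ`, taking
positive integer values, such that for every dimension `d ≥ 1`, every probability density `f`
on ℝ^d (with no further assumptions) and every sequence of radii `r n → 0` with `n * (r n)^d → ∞`,
if `G n` is the random geometric graph built from `n` i.i.d. points with density `f` and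
radius `r n`, then `P{Δ n (G n) = d} → 1`. -/
theorem exists_consistent_dimension_estimator :
    ∃ Δ : (n : ℕ) → SimpleGraph (Fin n) → ℕ,
      (∀ n G, 1 ≤ Δ n G) ∧
      ∀ (d : ℕ), 1 ≤ d →
      ∀ f : Euc d → ℝ, Measurable f → (∀ x, 0 ≤ f x) →
        (∫⁻ x, ENNReal.ofReal (f x) = 1) →
      ∀ r : ℕ → ℝ, (∀ n, 0 < r n) →
        Tendsto r atTop (nhds 0) →
        Tendsto (fun n : ℕ => (n : ℝ) * r n ^ d) atTop atTop →
        Tendsto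
          (fun n => (Measure.pi fun _ : Fin n => densityMeasure f)
            {x | Δ n (geomGraph (r n) x) = d})
          atTop (nhds 1) := by
  refine ⟨deltaFn, one_le_deltaFn, ?_⟩
  intro d hd f hfm hf0 hf1 r hrpos hrlim hrinf
  haveI hP : IsProbabilityMeasure (densityMeasure f) := ⟨by
    rw [densityMeasure, withDensity_apply _ MeasurableSet.univ, Measure.restrict_univ, hf1]⟩
  obtain ⟨ε, w, z, hε, hε1, hw1, hz1, hzz, hwzl, hwzu⟩ := exists_config d hd
  obtain ⟨x0, C, hC, r0, hr0, hdens⟩ := exists_density_point d f hfm hf1 hε hε1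
  set ctr : Fin (packing d + 1) → Euc d := Fin.cons w z with hctr
  have hctrnorm : ∀ j, ‖ctr j‖ ≤ 1 := by
    intro j
    refine Fin.cases ?_ (fun j' => ?_) j
    · rw [hctr, Fin.cons_zero]; exact hw1
    · rw [hctr, Fin.cons_succ]; exact hz1 j'
  set B : (n : ℕ) → Fin (packing d + 1) → Set (Euc d) :=
    fun n j => closedBall (x0 + r n • ctr j) (ε * r n) with hBdef
  set Ev : (n : ℕ) → Set (Fin n → Euc d) :=
    fun n => ⋂ j : Fin (packing d + 1), {x | ∃ i, x i ∈ B n j} with hEv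
  have hincl : ∀ n, Ev n ⊆ {x : Fin n → Euc d | deltaFn n (geomGraph (r n) x) = d} := by
    intro n x hx
    simp only [hEv, Set.mem_iInter, Set.mem_setOf_eq] at hx
    refine deltaFn_eq_on_event hd (hrpos n) hε w z x0 hzz hwzl hwzu x ?_ (fun j => ?_)
    · have h5 := hx 0
      simp only [hBdef, hctr, Fin.cons_zero] at h5
      exact h5
    · have h5 := hx j.succ
      simp only [hBdef, hctr, Fin.cons_succ] at h5
      exact h5
  set q : ℕ → ℝ := fun n => min 1 (C * r n ^ d) with hq
  have hq0 : ∀ n, 0 < q n := fun n => lt_min one_pos (mul_pos hC (pow_pos (hrpos n) d))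
  have hq1 : ∀ n, q n ≤ 1 := fun n => min_le_left _ _
  have hev1 : ∀ᶠ n in atTop, r n ≤ r0 := hrlim.eventually (eventually_le_nhds hr0)
  have hball : ∀ᶠ n in atTop, ∀ j, ENNReal.ofReal (q n) ≤ densityMeasure f (B n j) := by
    filter_upwards [hev1] with n hn j
    simp only [hBdef]
    refine le_trans (ENNReal.ofReal_le_ofReal (min_le_right _ _))
      (hdens (r n) (hrpos n) hn (ctr j) (hctrnorm j))
  have hmiss : ∀ᶠ n in atTop,
      (Measure.pi fun _ : Fin n => densityMeasure f) ((Ev n)ᶜ)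
        ≤ ENNReal.ofReal (((packing d:ℝ)+1) * Real.exp (-((n:ℝ) * q n))) := by
    filter_upwards [hball] with n hn
    have hcompl : (Ev n)ᶜ = ⋃ j : Fin (packing d + 1), {x : Fin n → Euc d | ∃ i, x i ∈ B n j}ᶜ := by
      rw [hEv]; rw [Set.compl_iInter]
    have hpiece : ∀ j : Fin (packing d + 1), (Measure.pi fun _ : Fin n => densityMeasure f)
        ({x : Fin n → Euc d | ∃ i, x i ∈ B n j}ᶜ)
          ≤ ENNReal.ofReal (Real.exp (-((n:ℝ) * q n))) := by
      intro j
      have hset : ({x : Fin n → Euc d | ∃ i, x i ∈ B n j}ᶜ)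
          = Set.pi Set.univ (fun _ : Fin n => (B n j)ᶜ) := by
        ext x
        simp [Set.mem_pi]
      rw [hset, Measure.pi_pi]
      have hBmeas : MeasurableSet (B n j) := by
        simp only [hBdef]; exact measurableSet_closedBall
      have h1 : densityMeasure f ((B n j)ᶜ) ≤ ENNReal.ofReal (1 - q n) := by
        rw [prob_compl_eq_one_sub hBmeas]
        calc (1:ℝ≥0∞) - densityMeasure f (B n j) ≤ 1 - ENNReal.ofReal (q n) :=
              tsub_le_tsub_left (hn j) 1
          _ = ENNReal.ofReal (1 - q n) := by
              rw [ENNReal.ofReal_sub _ (hq0 n).le, ENNReal.ofReal_one]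
      have hrealexp : (1 - q n)^n ≤ Real.exp (-((n:ℝ) * q n)) := by
        have h2 : 1 - q n ≤ Real.exp (-(q n)) := by
          linarith [Real.add_one_le_exp (-(q n))]
        calc (1 - q n)^n ≤ (Real.exp (-(q n)))^n :=
              pow_le_pow_left₀ (by linarith [hq1 n]) h2 n
          _ = Real.exp (-((n:ℝ) * q n)) := by
              rw [← Real.exp_nat_mul]; ring_nf
      calc ∏ _i : Fin n, densityMeasure f ((B n j)ᶜ)
          ≤ ∏ _i : Fin n, ENNReal.ofReal (1 - q n) :=
            Finset.prod_le_prod' fun i _ => h1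
        _ = (ENNReal.ofReal (1 - q n))^n := by
            rw [Finset.prod_const, Finset.card_univ, Fintype.card_fin]
        _ = ENNReal.ofReal ((1 - q n)^n) := (ENNReal.ofReal_pow (by linarith [hq1 n]) n).symm
        _ ≤ ENNReal.ofReal (Real.exp (-((n:ℝ) * q n))) := ENNReal.ofReal_le_ofReal hrealexp
    calc (Measure.pi fun _ : Fin n => densityMeasure f) ((Ev n)ᶜ)
        ≤ ∑ j : Fin (packing d + 1), (Measure.pi fun _ : Fin n => densityMeasure f)
            ({x : Fin n → Euc d | ∃ i, x i ∈ B n j}ᶜ) := by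
          rw [hcompl]
          exact (measure_iUnion_le _).trans_eq (tsum_fintype _)
      _ ≤ ∑ _j : Fin (packing d + 1), ENNReal.ofReal (Real.exp (-((n:ℝ) * q n))) :=
          Finset.sum_le_sum fun j _ => hpiece j
      _ = ENNReal.ofReal (((packing d:ℝ)+1) * Real.exp (-((n:ℝ) * q n))) := by
          rw [Finset.sum_const, Finset.card_univ, Fintype.card_fin, nsmul_eq_mul,
            ENNReal.ofReal_mul (by positivity), ← ENNReal.ofReal_natCast (packing d + 1)]
          push_cast
          ring_nf
  have hqinf : Tendsto (fun n : ℕ => (n:ℝ) * q n) atTop atTop := by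
    have hcr : Tendsto (fun n => C * r n ^ d) atTop (nhds 0) := by
      have h3 := hrlim.pow d
      rw [zero_pow (by omega : d ≠ 0)] at h3
      simpa using h3.const_mul C
    have hev2 : ∀ᶠ n in atTop, C * r n ^ d ≤ 1 := hcr.eventually (eventually_le_nhds one_pos)
    apply Tendsto.congr' ?_ (hrinf.const_mul_atTop hC)
    filter_upwards [hev2] with n hn
    simp only [hq]
    rw [min_eq_right hn]
    ring
  have hexp : Tendsto (fun n : ℕ => ((packing d:ℝ)+1) * Real.exp (-((n:ℝ) * q n))) atTop (nhds 0) := by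
    have h1 : Tendsto (fun n : ℕ => Real.exp (-((n:ℝ) * q n))) atTop (nhds 0) :=
      Real.tendsto_exp_atBot.comp (tendsto_neg_atBot_iff.2 hqinf)
    simpa using h1.const_mul ((packing d:ℝ)+1)
  have hlow : Tendsto (fun n : ℕ =>
      1 - ENNReal.ofReal (((packing d:ℝ)+1) * Real.exp (-((n:ℝ) * q n)))) atTop (nhds 1) := by
    have h2 : Tendsto (fun n : ℕ =>
        ENNReal.ofReal (((packing d:ℝ)+1) * Real.exp (-((n:ℝ) * q n)))) atTop (nhds 0) := by
      simpa using ENNReal.tendsto_ofReal hexp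
    have h3 := ((ENNReal.continuous_sub_left ENNReal.one_ne_top).tendsto 0).comp h2
    simpa [Function.comp_def] using h3
  refine tendsto_of_tendsto_of_tendsto_of_le_of_le' hlow tendsto_const_nhds ?_ ?_
  · filter_upwards [hmiss] with n hn
    have h1 : (1:ℝ≥0∞) ≤ (Measure.pi fun _ : Fin n => densityMeasure f) (Ev n)
        + (Measure.pi fun _ : Fin n => densityMeasure f) ((Ev n)ᶜ) := by
      calc (1:ℝ≥0∞) = (Measure.pi fun _ : Fin n => densityMeasure f) Set.univ :=
            measure_univ.symm
        _ = (Measure.pi fun _ : Fin n => densityMeasure f) (Ev n ∪ (Ev n)ᶜ) := by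
            rw [Set.union_compl_self]
        _ ≤ _ := measure_union_le _ _
    calc 1 - ENNReal.ofReal (((packing d:ℝ)+1) * Real.exp (-((n:ℝ) * q n)))
        ≤ 1 - (Measure.pi fun _ : Fin n => densityMeasure f) ((Ev n)ᶜ) :=
          tsub_le_tsub_left hn 1
      _ ≤ (Measure.pi fun _ : Fin n => densityMeasure f) (Ev n) := tsub_le_iff_right.2 h1
      _ ≤ _ := measure_mono (hincl n)
  · exact Eventually.of_forall fun n => prob_le_one

end
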